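/- arXiv:1311.3867 — 3 statements merged into one kernel-verified Lean document; each statement's English description precedes it below -/
import Mathlib

section
/- Let G^{1/m} be the m-fold subdivision of a graph G with n ≥ 3 vertices, and let a be an original vertex. A vertex z inside a thread x⋯y with x,y ≠ a is equidistant from the vertices at distance 1 from a on all threads a⋯v with v ∉ {x,y}; in particular such a probe distinguishes at most the two threads a⋯x and a⋯y among threads leaving a. -/
/-!
The transposition of `v` and `v'` is an automorphism of `K_n`, and every automorphism of a graph
induces one of its subdivision. Since the transposition fixes `x`, `y` and `a`, the induced
automorphism fixes every vertex of the thread `x ⋯ y` and sends the neighbour of `a` on `a ⋯ v`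
to the one on `a ⋯ v'`; automorphisms preserve distances.
-/

/-- Vertex type of the `m`-fold subdivision of `G`: original vertices (`Sum.inl`)
together with, for each edge `uv` of `G` (represented with `u < v`), internal
vertices `Sum.inr ⟨(u, v, i), _⟩`; the internal vertex with index `i : Fin (m-1)`
is the one at distance `i + 1` from `u` along the thread replacing `uv`. -/
def SubdivVert {V : Type*} [LT V] (G : SimpleGraph V) (m : ℕ) : Type _ :=
  V ⊕ {p : V × V × Fin (m - 1) // p.1 < p.2.1 ∧ G.Adj p.1 p.2.1}

/-- One-sided adjacency relation generating the `m`-fold subdivision of `G`. -/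
def SubdivRel {V : Type*} [LT V] (G : SimpleGraph V) (m : ℕ) :
    SubdivVert G m → SubdivVert G m → Prop
  | Sum.inl a, Sum.inl b => m = 1 ∧ G.Adj a b
  | Sum.inl a, Sum.inr p =>
      (a = p.1.1 ∧ (p.1.2.2 : ℕ) = 0) ∨ (a = p.1.2.1 ∧ (p.1.2.2 : ℕ) + 2 = m)
  | Sum.inr _, Sum.inl _ => False
  | Sum.inr p, Sum.inr q =>
      p.1.1 = q.1.1 ∧ p.1.2.1 = q.1.2.1 ∧ (p.1.2.2 : ℕ) + 1 = (q.1.2.2 : ℕ)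

/-- The `m`-fold subdivision `G^{1/m}` of `G`: each edge of `G` is replaced by a
path of length `m` through `m - 1` new internal vertices. -/
def Subdiv {V : Type*} [LT V] (G : SimpleGraph V) (m : ℕ) :
    SimpleGraph (SubdivVert G m) :=
  SimpleGraph.fromRel (SubdivRel G m)


/-- In `K_n^{1/m}` (`m ≥ 2`), the vertex at distance 1 from the original vertex `a`
on the thread `a ⋯ v` (for `v ≠ a`). -/
def nbrOnThread (n m : ℕ) (hm : 2 ≤ m) (a v : Fin n) (hav : a ≠ v) :
    SubdivVert (SimpleGraph.completeGraph (Fin n)) m :=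
  if h : a < v then
    Sum.inr ⟨(a, v, ⟨0, by omega⟩), h, by simpa [SimpleGraph.completeGraph] using hav⟩
  else
    Sum.inr ⟨(v, a, ⟨m - 2, by omega⟩), (hav.lt_or_gt).resolve_left h,
      by simpa [SimpleGraph.completeGraph] using hav.symm⟩

namespace SimpleGraph

variable {V W : Type*} {G : SimpleGraph V} {H : SimpleGraph W}

lemma Hom.edist_le (f : G →g H) (u v : V) : H.edist (f u) (f v) ≤ G.edist u v := by
  by_cases hr : G.Reachable u v
  · obtain ⟨p, hp⟩ := hr.exists_walk_length_eq_edist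
    calc H.edist (f u) (f v) ≤ (p.map f).length := SimpleGraph.edist_le _
      _ = G.edist u v := by rw [Walk.length_map, hp]
  · rw [edist_eq_top_of_not_reachable hr]
    exact le_top

lemma Iso.edist_eq (e : G ≃g H) (u v : V) : H.edist (e u) (e v) = G.edist u v :=
  le_antisymm (e.toHom.edist_le u v) (by simpa using e.symm.toHom.edist_le (e u) (e v))

lemma Iso.dist_eq (e : G ≃g H) (u v : V) : H.dist (e u) (e v) = G.dist u v :=
  congrArg ENat.toNat (e.edist_eq u v)

end SimpleGraph

namespace Subdiv

variable {V W X : Type*} [LinearOrder V] [LinearOrder W] [LinearOrder X]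
  {G : SimpleGraph V} {H : SimpleGraph W} {K : SimpleGraph X} {m : ℕ}

/-- Threads are stored from their smaller endpoint, so where `f` reverses the order of the
endpoints of a thread, the internal index is reversed. -/
def mapVert (f : G →g H) : SubdivVert G m → SubdivVert H m
  | Sum.inl a => Sum.inl (f a)
  | Sum.inr ⟨(u, w, i), h⟩ =>
      if hlt : f u < f w then Sum.inr ⟨(f u, f w, i), hlt, f.map_adj h.2⟩
      else Sum.inr ⟨(f w, f u, i.rev),
        (not_lt.mp hlt).lt_of_ne (f.map_adj h.2).ne.symm, (f.map_adj h.2).symm⟩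

lemma mapVert_inr_of_lt (f : G →g H) {u w : V} (i : Fin (m - 1)) (h : u < w ∧ G.Adj u w) (hlt : f u < f w) :
    mapVert f (Sum.inr ⟨(u, w, i), h⟩) = Sum.inr ⟨(f u, f w, i), hlt, f.map_adj h.2⟩ :=
  dif_pos hlt

lemma mapVert_inr_of_gt (f : G →g H) {u w : V} (i : Fin (m - 1)) (h : u < w ∧ G.Adj u w) (hlt : f w < f u) :
    mapVert f (Sum.inr ⟨(u, w, i), h⟩) =
      Sum.inr ⟨(f w, f u, i.rev), hlt, (f.map_adj h.2).symm⟩ :=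
  dif_neg hlt.asymm

lemma mapVert_id (x : SubdivVert G m) : mapVert SimpleGraph.Hom.id x = x := by
  rcases x with a | ⟨⟨u, w, i⟩, h⟩
  · rfl
  · exact mapVert_inr_of_lt _ i h h.1

lemma mapVert_mapVert (g : H →g K) (f : G →g H) (x : SubdivVert G m) :
    mapVert g (mapVert f x) = mapVert (g.comp f) x := by
  rcases x with a | ⟨⟨u, w, i⟩, h⟩
  · rfl
  have hf := (f.map_adj h.2).ne
  have hgf : g (f u) ≠ g (f w) := ((g.comp f).map_adj h.2).ne
  rcases hf.lt_or_gt with hf | hf <;> rcases hgf.lt_or_gt with hgf | hgf <;>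
    simp only [mapVert_inr_of_lt, mapVert_inr_of_gt, RelHom.comp_apply, hf, hgf, Fin.rev_rev]
    <;> rfl

lemma adj_of_subdivRel {x y : SubdivVert G m} (h : SubdivRel G m x y) : (Subdiv G m).Adj x y := by
  refine (SimpleGraph.fromRel_adj _ _ _).2 ⟨?_, Or.inl h⟩
  rintro rfl
  rcases x with a | _
  · exact h.2.ne rfl
  · exact absurd h.2.2 (by omega)

lemma subdivRel_mapVert (f : G →g H) {x y : SubdivVert G m} (h : SubdivRel G m x y) :
    SubdivRel H m (mapVert f x) (mapVert f y) ∨ SubdivRel H m (mapVert f y) (mapVert f x) := by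
  rcases x with a | ⟨⟨u, w, i⟩, hx⟩ <;> rcases y with b | ⟨⟨u', w', i'⟩, hy⟩
  · exact Or.inl ⟨h.1, f.map_adj h.2⟩
  · left
    have hi' := i'.isLt
    rcases (f.map_adj hy.2).ne.lt_or_gt with hlt | hlt
    · rw [mapVert_inr_of_lt f i' hy hlt]
      rcases h with ⟨rfl, h0⟩ | ⟨rfl, h2⟩
      exacts [Or.inl ⟨rfl, h0⟩, Or.inr ⟨rfl, h2⟩]
    · rw [mapVert_inr_of_gt f i' hy hlt]
      rcases h with ⟨rfl, h0⟩ | ⟨rfl, h2⟩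
      · exact Or.inr ⟨rfl, by simp only [Fin.val_rev] at h0 ⊢; omega⟩
      · exact Or.inl ⟨rfl, by simp only [Fin.val_rev] at h2 ⊢; omega⟩
  · exact h.elim
  · obtain ⟨rfl, rfl, hi⟩ := h
    have hi : (i : ℕ) + 1 = i' := hi
    rcases (f.map_adj hx.2).ne.lt_or_gt with hlt | hlt
    · rw [mapVert_inr_of_lt f i hx hlt, mapVert_inr_of_lt f i' hy hlt]
      exact Or.inl ⟨rfl, rfl, hi⟩
    · rw [mapVert_inr_of_gt f i hx hlt, mapVert_inr_of_gt f i' hy hlt]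
      exact Or.inr ⟨rfl, rfl, by simp only [Fin.val_rev]; omega⟩

lemma inr_congr {p q : V × V × Fin (m - 1)} (hp : p.1 < p.2.1 ∧ G.Adj p.1 p.2.1)
    (hq : q.1 < q.2.1 ∧ G.Adj q.1 q.2.1) (h : p = q) :
    (Sum.inr ⟨p, hp⟩ : SubdivVert G m) = Sum.inr ⟨q, hq⟩ := by
  subst h
  rfl

lemma mapVert_inr_of_fixed (f : G →g G) {u w : V} (i : Fin (m - 1)) (h : u < w ∧ G.Adj u w) (hu : f u = u)
    (hw : f w = w) : mapVert f (Sum.inr ⟨(u, w, i), h⟩) = Sum.inr ⟨(u, w, i), h⟩ := by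
  rw [mapVert_inr_of_lt f i h (by rw [hu, hw]; exact h.1)]
  exact inr_congr _ _ (by rw [hu, hw])

def map (f : G →g H) : Subdiv G m →g Subdiv H m where
  toFun := mapVert f
  map_rel' {x y} h := by
    rcases (SimpleGraph.fromRel_adj _ _ _).1 h with ⟨_, h | h⟩
    · exact (subdivRel_mapVert f h).elim adj_of_subdivRel (fun h' => (adj_of_subdivRel h').symm)
    · exact (subdivRel_mapVert f h).elim (fun h' => (adj_of_subdivRel h').symm) adj_of_subdivRel

lemma mapVert_symm_mapVert (e : G ≃g H) (x : SubdivVert G m) :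
    mapVert e.symm.toHom (mapVert e.toHom x) = x := by
  rw [mapVert_mapVert, e.symm_toHom_comp_toHom, mapVert_id]

def mapIso (e : G ≃g H) : Subdiv G m ≃g Subdiv H m where
  toFun := mapVert e.toHom
  invFun := mapVert e.symm.toHom
  left_inv := mapVert_symm_mapVert e
  right_inv := mapVert_symm_mapVert e.symm
  map_rel_iff' {x y} := by
    refine ⟨fun h => ?_, (map e.toHom).map_adj⟩
    rw [← mapVert_symm_mapVert e x, ← mapVert_symm_mapVert e y]
    exact (map e.symm.toHom).map_adj h

lemma nbrOnThread_of_lt {n m : ℕ} (hm : 2 ≤ m) {a v : Fin n} (hav : a ≠ v) (h : a < v) :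
    nbrOnThread n m hm a v hav = Sum.inr ⟨(a, v, ⟨0, by omega⟩), h, hav⟩ :=
  dif_pos h

lemma nbrOnThread_of_gt {n m : ℕ} (hm : 2 ≤ m) {a v : Fin n} (hav : a ≠ v) (h : v < a) :
    nbrOnThread n m hm a v hav = Sum.inr ⟨(v, a, ⟨m - 2, by omega⟩), h, hav.symm⟩ :=
  dif_neg h.asymm

lemma mapVert_nbrOnThread {n m : ℕ} (hm : 2 ≤ m)
    (f : SimpleGraph.completeGraph (Fin n) →g SimpleGraph.completeGraph (Fin n)) {a v w : Fin n}
    (ha : f a = a) (hav : a ≠ v) (haw : a ≠ w) (hw : f v = w) :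
    mapVert f (nbrOnThread n m hm a v hav) = nbrOnThread n m hm a w haw := by
  subst hw
  rcases hav.lt_or_gt with h1 | h1 <;> rcases haw.lt_or_gt with h2 | h2
  · rw [nbrOnThread_of_lt hm hav h1, nbrOnThread_of_lt hm haw h2,
      mapVert_inr_of_lt f _ _ (by rwa [ha])]
    exact inr_congr _ _ (by rw [ha])
  · rw [nbrOnThread_of_lt hm hav h1, nbrOnThread_of_gt hm haw h2,
      mapVert_inr_of_gt f _ _ (by rwa [ha])]
    exact inr_congr _ _ (by rw [ha]; rfl)
  · rw [nbrOnThread_of_gt hm hav h1, nbrOnThread_of_lt hm haw h2,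
      mapVert_inr_of_gt f _ _ (by rwa [ha])]
    exact inr_congr _ _ (by rw [ha]; congr 3; ext; simp only [Fin.val_rev]; omega)
  · rw [nbrOnThread_of_gt hm hav h1, nbrOnThread_of_gt hm haw h2,
      mapVert_inr_of_lt f _ _ (by rwa [ha])]
    exact inr_congr _ _ (by rw [ha])

end Subdiv

/-- In `K_n^{1/m}`, a vertex `z` strictly inside a thread `x ⋯ y` with `x, y ≠ a` is
equidistant from the vertices at distance 1 from `a` on the threads `a ⋯ v` and
`a ⋯ v'` whenever `v, v' ∉ {x, y, a}`. -/
theorem probe_inside_thread_equidistant (n m : ℕ) (hm : 2 ≤ m)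
    (a x y v v' : Fin n) (hxy : x < y)
    (hvx : v ≠ x) (hvy : v ≠ y) (hva : v ≠ a)
    (hv'x : v' ≠ x) (hv'y : v' ≠ y) (hv'a : v' ≠ a)
    (j : Fin (m - 1))
    (z : SubdivVert (SimpleGraph.completeGraph (Fin n)) m)
    (hz : z = Sum.inr ⟨(x, y, j), hxy, by simpa [SimpleGraph.completeGraph] using hxy.ne⟩) :
    (Subdiv (SimpleGraph.completeGraph (Fin n)) m).dist z (nbrOnThread n m hm a v hva.symm) =
      (Subdiv (SimpleGraph.completeGraph (Fin n)) m).dist z (nbrOnThread n m hm a v' hv'a.symm) := by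
  let σ := SimpleGraph.Iso.completeGraph (Equiv.swap v v')
  let e := Subdiv.mapIso (m := m) σ
  have hz_fixed : e z = z := hz ▸ Subdiv.mapVert_inr_of_fixed σ.toHom j _
    (Equiv.swap_apply_of_ne_of_ne hvx.symm hv'x.symm)
    (Equiv.swap_apply_of_ne_of_ne hvy.symm hv'y.symm)
  have hw : e (nbrOnThread n m hm a v hva.symm) = nbrOnThread n m hm a v' hv'a.symm :=
    Subdiv.mapVert_nbrOnThread hm σ.toHom (Equiv.swap_apply_of_ne_of_ne hva.symm hv'a.symm) _ _
      (Equiv.swap_apply_left v v')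
  simpa only [hz_fixed, hw] using (e.dist_eq z (nbrOnThread n m hm a v hva.symm)).symm
end

section
/- The robber wins the robber-locating game on any connected bipartite graph of girth 6. -/
/-- A valid robber trajectory: `r t` is the robber's position at the time of the
cop's `t`-th probe; between consecutive probes the robber stays put or moves along
an edge. -/
def ValidTraj {V : Type*} (G : SimpleGraph V) (r : ℕ → V) : Prop :=
  ∀ t, r (t + 1) = r t ∨ G.Adj (r t) (r (t + 1))

/-- Given a cop strategy `c` (choosing the next probed vertex from the list of
distance responses received so far) and a robber trajectory `r`, `resps G c r t`
is the list of the first `t` distance responses. -/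
noncomputable def resps {V : Type*} (G : SimpleGraph V) (c : List ℕ → V) (r : ℕ → V) : ℕ → List ℕ
  | 0 => []
  | t + 1 => resps G c r t ++ [G.dist (c (resps G c r t)) (r t)]

/-- A graph is locatable if the cop has a strategy which, within a bounded number
of probes, determines the robber's current position: after some probe `t`, every
valid trajectory producing the same responses is at the same vertex at time `t`. -/
def Locatable {V : Type*} (G : SimpleGraph V) : Prop :=
  ∃ (c : List ℕ → V) (T : ℕ), ∀ r : ℕ → V, ValidTraj G r →
    ∃ t ≤ T, ∀ r' : ℕ → V, ValidTraj G r' →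
      resps G c r' (t + 1) = resps G c r (t + 1) → r' t = r t

/-!
The robber lives on a 6-cycle `v₀ … v₅` and keeps two candidate positions `v (m - 1)` and
`v (m + 1)` around a centre `v m`. In a connected bipartite graph the distance from a probed
vertex changes by exactly one along every edge of the cycle, and these six `±1` steps sum to
zero; hence the steps on the four edges around `v (m - 2) … v (m + 2)` cannot all have the same
sign, so one of `m - 1`, `m`, `m + 1` is a centre whose two neighbours on the cycle are
equidistant from the probe. The robber moves the centre there, and the answer to the probe
cannot tell the two candidates apart.
-/

open SimpleGraph

namespace SimpleGraph

variable {V : Type*} {G : SimpleGraph V}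

theorem odd_dist_add_dist_of_adj (hb : G.Colorable 2) {x u w : V} (hx : G.Reachable x u)
    (huw : G.Adj u w) : Odd (G.dist x u + G.dist x w) := by
  obtain ⟨p, hp⟩ := hx.exists_walk_length_eq_dist
  obtain ⟨q, hq⟩ := (hx.trans huw.reachable).exists_walk_length_eq_dist
  have heven := two_colorable_iff_forall_loop_even.mp hb x ((p.concat huw).append q.reverse)
  rw [Walk.length_append, Walk.length_concat, Walk.length_reverse, hp, hq] at heven
  rwa [add_right_comm, Nat.even_add_one, Nat.not_even_iff_odd] at heven

theorem dist_eq_add_one_or_of_adj (hb : G.Colorable 2) {x u w : V} (hx : G.Reachable x u)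
    (huw : G.Adj u w) : G.dist x w = G.dist x u + 1 ∨ G.dist x u = G.dist x w + 1 := by
  have hodd := Nat.odd_iff.mp (odd_dist_add_dist_of_adj hb hx huw)
  rcases huw.diff_dist_adj (u := x) with h | h | h <;> omega

theorem cycleGraph_adj_add_one {n : ℕ} (i : Fin (n + 2)) : (cycleGraph (n + 2)).Adj i (i + 1) :=
  cycleGraph_adj.mpr (Or.inr (add_sub_cancel_left i 1))

theorem Copy.eq_or_adj_of_cycleGraph {n : ℕ} (f : Copy (cycleGraph (n + 1)) G)
    {s s' : Fin (n + 1)} (h : s' = s ∨ (cycleGraph (n + 1)).Adj s s') (d : Fin (n + 1)) :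
    f (s' + d) = f (s + d) ∨ G.Adj (f (s + d)) (f (s' + d)) := by
  refine h.imp (congrArg (f <| · + d)) fun h ↦ f.toHom.map_adj ?_
  rwa [cycleGraph_eq_circulantGraph, circulantGraph_adj_translate, ← cycleGraph_eq_circulantGraph]

end SimpleGraph

theorem Fin.exists_eq_or_cycleGraph_adj_and_eq (d : Fin 6 → ℕ)
    (hd : ∀ i, d (i + 1) = d i + 1 ∨ d i = d (i + 1) + 1) (m : Fin 6) :
    ∃ m', (m' = m ∨ (cycleGraph 6).Adj m m') ∧ d (m' - 1) = d (m' + 1) := by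
  by_contra! h
  have hl := h (m - 1) (Or.inr <| by
    simpa only [sub_add_cancel] using (cycleGraph_adj_add_one (n := 4) (m - 1)).symm)
  have hc := h m (Or.inl rfl)
  have hr := h (m + 1) (Or.inr (cycleGraph_adj_add_one m))
  have h0 := hd 0; have h1 := hd 1; have h2 := hd 2
  have h3 := hd 3; have h4 := hd 4; have h5 := hd 5
  simp only [Fin.reduceAdd] at h0 h1 h2 h3 h4 h5
  fin_cases m <;>
    simp only [Fin.isValue, Fin.reduceAdd, Fin.reduceSub, Fin.reduceFinMk] at hl hc hr <;> omega

/-- At time `t` the play is `(s, L)`: `L` lists the responses to the probes before the `t`-th,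
and the state `s`, whose candidate positions are `a s` and `b s`, is chosen knowing the `t`-th
probe `c L`, which the robber can predict. -/
noncomputable def twinPlay {V σ : Type*} (G : SimpleGraph V) (c : List ℕ → V) (a : σ → V)
    (next : σ → V → σ) (s₀ : σ) : ℕ → σ × List ℕ
  | 0 => (next s₀ (c []), [])
  | t + 1 =>
    let p := twinPlay G c a next s₀ t
    let L := p.2 ++ [G.dist (c p.2) (a p.1)]
    (next p.1 (c L), L)

theorem not_locatable_of_twin_evasion {V σ : Type*} [Nonempty σ] {G : SimpleGraph V}
    (a b : σ → V) (hab : ∀ s, a s ≠ b s)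
    (hstep : ∀ s x, ∃ s', (a s' = a s ∨ G.Adj (a s) (a s')) ∧
      (b s' = b s ∨ G.Adj (b s) (b s')) ∧ G.dist x (a s') = G.dist x (b s')) :
    ¬ Locatable G := by
  rintro ⟨c, T, hcop⟩
  choose next hna hnb hdist using hstep
  set play := twinPlay G c a next (Classical.arbitrary σ)
  have hbal : ∀ t,
      G.dist (c (play t).2) (a (play t).1) = G.dist (c (play t).2) (b (play t).1) := by
    rintro (_ | t) <;> exact hdist _ _
  have hresps : ∀ t, resps G c (fun t ↦ a (play t).1) t = (play t).2 ∧
      resps G c (fun t ↦ b (play t).1) t = (play t).2 := by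
    intro t
    induction t with
    | zero => exact ⟨rfl, rfl⟩
    | succ t ih => exact ⟨by rw [resps, ih.1]; rfl, by rw [resps, ih.2, ← hbal]; rfl⟩
  obtain ⟨t, -, hloc⟩ := hcop (fun t ↦ a (play t).1) fun t ↦ hna _ _
  refine hab _ (hloc (fun t ↦ b (play t).1) (fun t ↦ hnb _ _) ?_).symm
  rw [(hresps _).1, (hresps _).2]

theorem not_locatable_of_cycleGraph_six_isContained {V : Type*} {G : SimpleGraph V}
    (hc : G.Connected) (hb : G.Colorable 2) (h6 : cycleGraph 6 ⊑ G) : ¬ Locatable G := by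
  obtain ⟨f⟩ := h6
  have hne : ∀ s : Fin 6, s - 1 ≠ s + 1 := by decide
  refine not_locatable_of_twin_evasion (fun s ↦ f (s - 1)) (fun s ↦ f (s + 1))
    (fun s ↦ f.injective.ne (hne s)) fun s x ↦ ?_
  obtain ⟨s', hs', hd⟩ := Fin.exists_eq_or_cycleGraph_adj_and_eq (fun i ↦ G.dist x (f i))
    (fun i ↦ dist_eq_add_one_or_of_adj hb (hc.preconnected x _)
      (f.toHom.map_adj (cycleGraph_adj_add_one i))) s
  simp only [sub_eq_add_neg] at hd ⊢
  exact ⟨s', f.eq_or_adj_of_cycleGraph hs' _, f.eq_or_adj_of_cycleGraph hs' _, hd⟩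

/-- The robber wins the robber-locating game on any connected bipartite graph of
girth 6: no such graph is locatable. -/
theorem bipartite_girth_six_not_locatable {V : Type*} (G : SimpleGraph V)
    (hc : G.Connected) (hb : G.Colorable 2) (hg : G.girth = 6) :
    ¬ Locatable G := by
  have hcyclic : ¬ G.IsAcyclic := fun h ↦ by simp [girth_eq_zero.mpr h] at hg
  obtain ⟨a, w, hw, hlen⟩ := exists_girth_eq_length.mpr hcyclic
  have hw6 : w.length = 6 := by exact_mod_cast hlen.symm.trans hg
  exact not_locatable_of_cycleGraph_six_isContained hc hb
    ((cycleGraph_isContained_iff (by norm_num)).mpr ⟨a, w, hw, hw6⟩)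
end

section
/- The cycle C6 is not locatable in the robber-locating game. -/
/-!
The robber keeps a twin two steps behind it: before each probe `q`, the robber sits at
`y` with `y - 2 = 2q - y`, so its twin is its mirror image under the reflection of `C₆` about `q`,
an automorphism fixing `q`; the two are equidistant from `q` and the cop cannot tell them apart.
Since the twin copies the robber's moves, it is a legal robber too, and it never coincides with it.
-/

open SimpleGraph

section Metric

variable {V W : Type*} {G : SimpleGraph V} {G' : SimpleGraph W}

lemma SimpleGraph.Hom.dist_map_le (f : G →g G') {u v : V} (h : G.Reachable u v) :
    G'.dist (f u) (f v) ≤ G.dist u v := by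
  obtain ⟨p, hp⟩ := h.exists_walk_length_eq_dist
  calc G'.dist (f u) (f v) ≤ (p.map f).length := dist_le _
    _ = G.dist u v := by rw [Walk.length_map, hp]

lemma SimpleGraph.Iso.dist_map (e : G ≃g G') (u v : V) : G'.dist (e u) (e v) = G.dist u v := by
  by_cases h : G.Reachable u v
  · refine le_antisymm (e.toHom.dist_map_le h) ?_
    simpa using e.symm.toHom.dist_map_le (Iso.reachable_iff.2 h : G'.Reachable (e u) (e v))
  · rw [dist_eq_zero_of_not_reachable h,
      dist_eq_zero_of_not_reachable (mt Iso.reachable_iff.1 h)]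

end Metric

namespace SimpleGraph.cycleGraph

variable {n : ℕ}

def reflect (a : Fin (n + 2)) : cycleGraph (n + 2) ≃g cycleGraph (n + 2) where
  toEquiv := Equiv.subLeft a
  map_rel_iff' := by simp [cycleGraph_adj, or_comm]

def translate (a : Fin (n + 2)) : cycleGraph (n + 2) ≃g cycleGraph (n + 2) where
  toEquiv := Equiv.addRight a
  map_rel_iff' := by simp [cycleGraph_adj]

lemma dist_reflect_eq (p x : Fin (n + 2)) :
    (cycleGraph (n + 2)).dist p (p + p - x) = (cycleGraph (n + 2)).dist p x := by
  have h := (reflect (p + p)).dist_map p x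
  rwa [show reflect (p + p) p = p from add_sub_cancel_right p p] at h

end SimpleGraph.cycleGraph

section Game

variable {V : Type*} {G : SimpleGraph V}

lemma ValidTraj.map {W : Type*} {G' : SimpleGraph W} {r : ℕ → V} (h : ValidTraj G r)
    (f : G →g G') : ValidTraj G' (f ∘ r) := fun t =>
  (h t).imp (congrArg f) f.map_adj

lemma resps_eq_of_dist_eq {c : List ℕ → V} {r r' : ℕ → V}
    (h : ∀ t, G.dist (c (resps G c r t)) (r' t) = G.dist (c (resps G c r t)) (r t)) (t : ℕ) :
    resps G c r' t = resps G c r t := by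
  induction t with
  | zero => rfl
  | succ t ih => rw [resps, resps, ih, h]

lemma not_locatable_of_exists_twin
    (h : ∀ c : List ℕ → V, ∃ r r' : ℕ → V, ValidTraj G r ∧ ValidTraj G r' ∧
      (∀ t, G.dist (c (resps G c r t)) (r' t) = G.dist (c (resps G c r t)) (r t)) ∧
      ∀ t, r' t ≠ r t) :
    ¬ Locatable G := by
  rintro ⟨c, T, hc⟩
  obtain ⟨r, r', hr, hr', hdist, hne⟩ := h c
  obtain ⟨t, -, ht⟩ := hc r hr
  exact hne t (ht r' hr' (resps_eq_of_dist_eq hdist _))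

variable (G)

/-- The robber knows the cop's strategy, so after answering probe `t` it already knows the vertex
`q` of probe `t + 1` and may move from `x` to `move x q`; the second component records the
responses. -/
noncomputable def reactivePlay (c : List ℕ → V) (x₀ : V) (move : V → V → V) :
    ℕ → V × List ℕ
  | 0 => (x₀, [])
  | t + 1 =>
    let L := (reactivePlay c x₀ move t).2 ++
      [G.dist (c (reactivePlay c x₀ move t).2) (reactivePlay c x₀ move t).1]
    (move (reactivePlay c x₀ move t).1 (c L), L)

lemma resps_reactivePlay (c : List ℕ → V) (x₀ : V) (move : V → V → V) (t : ℕ) :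
    resps G c (fun t => (reactivePlay G c x₀ move t).1) t = (reactivePlay G c x₀ move t).2 := by
  induction t with
  | zero => rfl
  | succ t ih => rw [resps, ih]; rfl

lemma exists_traj_reacting (c : List ℕ → V) (x₀ : V) (move : V → V → V) :
    ∃ r : ℕ → V, r 0 = x₀ ∧ ∀ t, r (t + 1) = move (r t) (c (resps G c r (t + 1))) :=
  ⟨_, rfl, fun t => by rw [resps_reactivePlay]; rfl⟩

end Game

/-- The doubles `2x - 2, 2x, 2x + 2` of `x - 1, x, x + 1` are all the even residues mod 6. -/
lemma cycleGraph_six_exists_step (x q : Fin 6) :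
    ∃ y, (y = x ∨ (cycleGraph 6).Adj x y) ∧ y - 2 = q + q - y := by
  revert x q; decide

/-- The 6-cycle `C₆` is not locatable in the robber-locating game. -/
theorem cycleGraph_six_not_locatable : ¬ Locatable (SimpleGraph.cycleGraph 6) := by
  refine not_locatable_of_exists_twin fun c => ?_
  choose move hmove using cycleGraph_six_exists_step
  obtain ⟨r, hr0, hr⟩ := exists_traj_reacting (cycleGraph 6) c (c [] + 1) move
  have hsymm : ∀ t,
      r t - 2 = c (resps (cycleGraph 6) c r t) + c (resps (cycleGraph 6) c r t) - r t := by
    rintro (_ | t)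
    · rw [hr0, resps]; abel
    · rw [hr]; exact (hmove _ _).2
  have hvalid : ValidTraj (cycleGraph 6) r := fun t => by
    rw [hr]; exact (hmove _ _).1
  refine ⟨r, cycleGraph.translate (-2) ∘ r, hvalid, hvalid.map (cycleGraph.translate _).toHom,
    fun t => ?_, fun t => ?_⟩
  · simp [cycleGraph.translate, ← sub_eq_add_neg, hsymm, cycleGraph.dist_reflect_eq]
  · simp [cycleGraph.translate]
end
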